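/- arXiv:1906.01827 — 4 statements merged into one kernel-verified Lean document; each statement's English description precedes it below -/
import Mathlib

section
/- Let F : 2^V → ℝ≥0 be a monotone submodular function with F(∅) = 0 on a finite set V, and let S* be any subset of V. Let S_i denote the set produced after i steps of the greedy algorithm that starts from ∅ and at each step adds an element with maximal marginal gain. Then for every i ≥ 0 and every k ≥ 1 with |S*| ≤ k, F(S_i) ≥ (1 − e^{−i/k}) F(S*). -/
/-!
Let `Sᵢ` be the greedy sets and `gᵢ = F(S*) - F(Sᵢ)` the remaining gap. Monotonicity and
submodularity give `F(S*) ≤ F(Sᵢ ∪ S*) ≤ F(Sᵢ) + ∑_{e ∈ S*} (F(Sᵢ ∪ {e}) - F(Sᵢ))`, and each of the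
at most `k` marginal gains is at most the greedy gain `gᵢ - gᵢ₊₁`. Hence `gᵢ ≤ k (gᵢ - gᵢ₊₁)`, i.e.
`gᵢ₊₁ ≤ (1 - 1/k) gᵢ`, so `gᵢ ≤ (1 - 1/k)^i g₀ ≤ e^{-i/k} F(S*)`.
-/

open Finset

section Submodular

variable {ι : Type*} [DecidableEq ι]

def marginalGain (F : Finset ι → ℝ) (S : Finset ι) (e : ι) : ℝ :=
  F (insert e S) - F S

variable {F : Finset ι → ℝ}

theorem marginalGain_nonneg (hmono : ∀ S T : Finset ι, S ⊆ T → F S ≤ F T)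
    (S : Finset ι) (e : ι) : 0 ≤ marginalGain F S e :=
  sub_nonneg.2 (hmono _ _ (subset_insert _ _))

theorem apply_union_le_add_sum_marginalGain (hmono : ∀ S T : Finset ι, S ⊆ T → F S ≤ F T)
    (hsub : ∀ S T : Finset ι, S ⊆ T → ∀ e, e ∉ T → marginalGain F T e ≤ marginalGain F S e)
    (S T : Finset ι) : F (S ∪ T) ≤ F S + ∑ e ∈ T, marginalGain F S e := by
  induction T using Finset.induction_on with
  | empty => simp
  | @insert a T ha ih =>
    rw [sum_insert ha, union_insert]
    by_cases haST : a ∈ S ∪ T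
    · rw [insert_eq_of_mem haST]
      linarith [marginalGain_nonneg hmono S a]
    · have : F (insert a (S ∪ T)) - F (S ∪ T) ≤ marginalGain F S a :=
        hsub S (S ∪ T) subset_union_left a haST
      linarith

theorem sub_le_mul_marginalGain_of_forall_le (hmono : ∀ S T : Finset ι, S ⊆ T → F S ≤ F T)
    (hsub : ∀ S T : Finset ι, S ⊆ T → ∀ e, e ∉ T → marginalGain F T e ≤ marginalGain F S e)
    {S T : Finset ι} {e : ι} (hmax : ∀ e', F (insert e' S) ≤ F (insert e S))
    {k : ℕ} (hcard : #T ≤ k) : F T - F S ≤ k * marginalGain F S e := by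
  have hsum : ∑ e' ∈ T, marginalGain F S e' ≤ #T * marginalGain F S e := by
    rw [← nsmul_eq_mul, ← sum_const]
    exact sum_le_sum fun e' _ => sub_le_sub_right (hmax e') _
  have hcard' : (#T : ℝ) * marginalGain F S e ≤ k * marginalGain F S e :=
    mul_le_mul_of_nonneg_right (by exact_mod_cast hcard) (marginalGain_nonneg hmono S e)
  linarith [hmono T (S ∪ T) subset_union_right, apply_union_le_add_sum_marginalGain hmono hsub S T]

end Submodular

theorem one_sub_inv_pow_le_exp {c : ℝ} (hc : 1 ≤ c) (n : ℕ) :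
    (1 - c⁻¹) ^ n ≤ Real.exp (-n / c) := by
  have hbase : 0 ≤ 1 - c⁻¹ := sub_nonneg.2 (inv_le_one_of_one_le₀ hc)
  calc (1 - c⁻¹) ^ n ≤ Real.exp (-c⁻¹) ^ n :=
        pow_le_pow_left₀ hbase (by linarith [Real.add_one_le_exp (-c⁻¹)]) n
    _ = Real.exp (-n / c) := by rw [← Real.exp_nat_mul]; ring_nf

theorem le_exp_mul_of_le_mul_sub {g : ℕ → ℝ} {c : ℝ} (hc : 1 ≤ c) (hg0 : 0 ≤ g 0)
    (hstep : ∀ i, g i ≤ c * (g i - g (i + 1))) (n : ℕ) :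
    g n ≤ Real.exp (-n / c) * g 0 := by
  have hc0 : 0 < c := by linarith
  have hbase : 0 ≤ 1 - c⁻¹ := sub_nonneg.2 (inv_le_one_of_one_le₀ hc)
  have hgeom : ∀ i, g i ≤ (1 - c⁻¹) ^ i * g 0 := by
    intro i
    induction i with
    | zero => simp
    | succ i ih =>
      calc g (i + 1) = c⁻¹ * (c * g (i + 1)) := by field_simp
        _ ≤ c⁻¹ * ((c - 1) * g i) :=
          mul_le_mul_of_nonneg_left (by linarith [hstep i]) (inv_nonneg.2 hc0.le)
        _ = (1 - c⁻¹) * g i := by field_simp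
        _ ≤ (1 - c⁻¹) * ((1 - c⁻¹) ^ i * g 0) := mul_le_mul_of_nonneg_left ih hbase
        _ = (1 - c⁻¹) ^ (i + 1) * g 0 := by ring
  exact (hgeom n).trans (mul_le_mul_of_nonneg_right (one_sub_inv_pow_le_exp hc n) hg0)

theorem stmt_3_general {ι : Type*} [DecidableEq ι]
    (F : Finset ι → ℝ)
    (hF0 : F ∅ = 0)
    (hmono : ∀ S T : Finset ι, S ⊆ T → F S ≤ F T)
    (hsub : ∀ S T : Finset ι, S ⊆ T → ∀ e, e ∉ T →
      F (insert e T) - F T ≤ F (insert e S) - F S)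
    (Sg : ℕ → Finset ι)
    (hSg0 : Sg 0 = ∅)
    (hgreedy : ∀ i : ℕ, ∃ e : ι, Sg (i + 1) = insert e (Sg i) ∧
      ∀ e' : ι, F (insert e' (Sg i)) ≤ F (insert e (Sg i)))
    (Sstar : Finset ι) (k : ℕ) (hk : 1 ≤ k) (hcard : Sstar.card ≤ k) :
    ∀ i : ℕ, (1 - Real.exp (-(i : ℝ) / (k : ℝ))) * F Sstar ≤ F (Sg i) := by
  intro i
  have hF : 0 ≤ F Sstar := hF0 ▸ hmono ∅ Sstar (empty_subset _)
  have hgreedy_step (j : ℕ) :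
      F Sstar - F (Sg j) ≤ k * ((F Sstar - F (Sg j)) - (F Sstar - F (Sg (j + 1)))) := by
    obtain ⟨e, hSg, hmax⟩ := hgreedy j
    rw [hSg, sub_sub_sub_cancel_left]
    exact sub_le_mul_marginalGain_of_forall_le hmono hsub hmax hcard
  have hgap := le_exp_mul_of_le_mul_sub (g := fun j => F Sstar - F (Sg j))
    (by exact_mod_cast hk) (by simpa [hSg0, hF0] using hF) hgreedy_step i
  simp only [hSg0, hF0, sub_zero] at hgap
  linarith

/-- Greedy guarantee for monotone submodular maximization: after `i` greedy steps,
`F(S_i) ≥ (1 − e^{−i/k}) F(S*)` whenever `|S*| ≤ k`. -/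
theorem stmt_3 {ι : Type*} [Fintype ι] [DecidableEq ι]
    (F : Finset ι → ℝ)
    (hF0 : F ∅ = 0)
    (hmono : ∀ S T : Finset ι, S ⊆ T → F S ≤ F T)
    (hsub : ∀ S T : Finset ι, S ⊆ T → ∀ e, e ∉ T →
      F (insert e T) - F T ≤ F (insert e S) - F S)
    (Sg : ℕ → Finset ι)
    (hSg0 : Sg 0 = ∅)
    (hgreedy : ∀ i : ℕ, ∃ e : ι, Sg (i + 1) = insert e (Sg i) ∧
      ∀ e' : ι, F (insert e' (Sg i)) ≤ F (insert e (Sg i)))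
    (Sstar : Finset ι) (k : ℕ) (hk : 1 ≤ k) (hcard : Sstar.card ≤ k) :
    ∀ i : ℕ, (1 - Real.exp (-(i : ℝ) / (k : ℝ))) * F Sstar ≤ F (Sg i) :=
  stmt_3_general F hF0 hmono hsub Sg hSg0 hgreedy Sstar k hk hcard
end

section
/- Let (u_k) be a sequence of nonnegative reals such that for all k ≥ k₀, u_{k+1} ≤ (1 − c/k) u_k + e/k + d/k², where c, d, e > 0 and c > 0 (case p = 1 of the recursion). Then limsup_{k→∞} u_k ≤ e/c. -/
open Filter Asymptotics

/-!
Writing `a k = c / k`, the recursion reads `u (k+1) ≤ (1 - a k) u k + a k (e / c) + d / k²`,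
and `d / k² = o(a k)` while `∑ a k = ∞`. Fix `ε > 0`. Eventually, whenever `u k ≥ e / c + ε` the
sequence drops by at least `ε a k / 2`, which cannot go on forever because `∑ a k` diverges and
`u` is bounded below; and once `u k ≤ e / c + ε` this bound propagates to all later terms.
-/

lemma not_forall_le_sub_of_not_summable {w a : ℕ → ℝ} (hw : IsBoundedUnder (· ≥ ·) atTop w)
    (ha₀ : ∀ k, 0 ≤ a k) (ha : ¬Summable a) (N : ℕ) :
    ¬∀ k ≥ N, w (k + 1) ≤ w k - a k := by
  intro hdesc
  have htelescope : ∀ n, w (n + N) ≤ w N - ∑ i ∈ Finset.range n, a (i + N) := by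
    intro n
    induction n with
    | zero => simp
    | succ n ih =>
      rw [Finset.sum_range_succ, add_right_comm]
      linarith [hdesc (n + N) (Nat.le_add_left N n)]
  have hsum : Tendsto (fun n ↦ ∑ i ∈ Finset.range n, a (i + N)) atTop atTop :=
    (not_summable_iff_tendsto_nat_atTop_of_nonneg fun i ↦ ha₀ (i + N)).1
      ((summable_nat_add_iff N).not.2 ha)
  have hbot : Tendsto w atTop atBot :=
    (tendsto_add_atTop_iff_nat N).1 <| tendsto_atBot_mono htelescope <|
      tendsto_atBot_add_const_left _ (w N) (tendsto_neg_atTop_atBot.comp hsum)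
  exact not_isBoundedUnder_of_tendsto_atBot hbot hw

section Chung

variable {u a b : ℕ → ℝ} {L : ℝ}

lemma eventually_le_add_of_le_one_sub_mul_add (hu : IsBoundedUnder (· ≥ ·) atTop u)
    (ha₀ : ∀ k, 0 ≤ a k) (ha₁ : ∀ᶠ k in atTop, a k ≤ 1) (ha : ¬Summable a) (hb : b =o[atTop] a)
    (hrec : ∀ᶠ k in atTop, u (k + 1) ≤ (1 - a k) * u k + a k * L + b k)
    {ε : ℝ} (hε : 0 < ε) : ∀ᶠ k in atTop, u k ≤ L + ε := by
  obtain ⟨N, hN⟩ := eventually_atTop.1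
    (ha₁.and (hrec.and (hb.bound (half_pos hε))))
  have hstep : ∀ k ≥ N, u (k + 1) ≤ (1 - a k) * u k + a k * L + ε / 2 * a k := by
    intro k hk
    obtain ⟨-, hrec, hb⟩ := hN k hk
    rw [Real.norm_eq_abs, Real.norm_of_nonneg (ha₀ k)] at hb
    linarith [le_abs_self (b k)]
  have htrap : ∀ k ≥ N, u k ≤ L + ε → u (k + 1) ≤ L + ε := by
    intro k hk hk'
    have : (1 - a k) * u k ≤ (1 - a k) * (L + ε) :=
      mul_le_mul_of_nonneg_left hk' (sub_nonneg.2 (hN k hk).1)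
    linarith [hstep k hk, mul_nonneg hε.le (ha₀ k)]
  have hdrop : ∀ k ≥ N, L + ε < u k → u (k + 1) ≤ u k - ε / 2 * a k := by
    intro k hk hk'
    nlinarith [hstep k hk, ha₀ k]
  obtain ⟨n, hnN, hn⟩ : ∃ n ≥ N, u n ≤ L + ε := by
    by_contra! hfar
    refine not_forall_le_sub_of_not_summable hu (fun k ↦ mul_nonneg (half_pos hε).le (ha₀ k))
      ?_ N fun k hk ↦ hdrop k hk (hfar k hk)
    exact (summable_mul_left_iff (half_pos hε).ne').not.2 ha
  refine eventually_atTop.2 ⟨n, fun m hm ↦ ?_⟩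
  induction m, hm using Nat.le_induction with
  | base => exact hn
  | succ m hm ih => exact htrap m (hnN.trans hm) ih

lemma limsup_le_of_le_one_sub_mul_add (hu : IsBoundedUnder (· ≥ ·) atTop u)
    (ha₀ : ∀ k, 0 ≤ a k) (ha₁ : ∀ᶠ k in atTop, a k ≤ 1) (ha : ¬Summable a) (hb : b =o[atTop] a)
    (hrec : ∀ᶠ k in atTop, u (k + 1) ≤ (1 - a k) * u k + a k * L + b k) :
    limsup u atTop ≤ L :=
  le_of_forall_pos_le_add fun _ hε ↦ limsup_le_of_le hu.isCoboundedUnder_flip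
    (eventually_le_add_of_le_one_sub_mul_add hu ha₀ ha₁ ha hb hrec hε)

end Chung

lemma not_summable_const_div_natCast {c : ℝ} (hc : c ≠ 0) : ¬Summable fun k : ℕ ↦ c / k := by
  simpa only [div_eq_mul_inv, summable_mul_left_iff hc] using Real.not_summable_natCast_inv

lemma const_div_sq_isLittleO_const_div (c d : ℝ) (hc : c ≠ 0) :
    (fun k : ℕ ↦ d / (k : ℝ) ^ 2) =o[atTop] fun k ↦ c / k := by
  refine (isLittleO_iff_tendsto' (Eventually.of_forall fun k hk ↦ ?_)).2 <|
    (tendsto_const_div_atTop_nhds_zero_nat (d / c)).congr fun k ↦ ?_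
  · simp_all
  · rcases k.eq_zero_or_pos with rfl | hk
    · simp
    · field_simp

theorem stmt_4_general (u : ℕ → ℝ) (hu : ∀ k, 0 ≤ u k)
    (c d e : ℝ) (hc : 0 < c)
    (k₀ : ℕ)
    (hrec : ∀ k : ℕ, k₀ ≤ k →
      u (k + 1) ≤ (1 - c / (k : ℝ)) * u k + e / (k : ℝ) + d / (k : ℝ) ^ 2) :
    Filter.limsup u Filter.atTop ≤ e / c := by
  refine limsup_le_of_le_one_sub_mul_add (a := fun k : ℕ ↦ c / k) (b := fun k : ℕ ↦ d / k ^ 2)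
    (isBoundedUnder_of_eventually_ge (a := 0) (.of_forall hu))
    (fun k ↦ by positivity)
    ((tendsto_const_div_atTop_nhds_zero_nat c).eventually (eventually_le_nhds one_pos))
    (not_summable_const_div_natCast hc.ne') (const_div_sq_isLittleO_const_div c d hc.ne')
    (eventually_atTop.2 ⟨k₀, fun k hk ↦ ?_⟩)
  have hL : c / k * (e / c) = e / k := by field_simp
  simpa only [hL] using hrec k hk

/-- Chung-type lemma, case `p = 1`: if `u_{k+1} ≤ (1 − c/k) u_k + e/k + d/k²`
eventually, then `limsup u_k ≤ e/c`. -/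
theorem stmt_4 (u : ℕ → ℝ) (hu : ∀ k, 0 ≤ u k)
    (c d e : ℝ) (hc : 0 < c) (hd : 0 < d) (he : 0 < e)
    (k₀ : ℕ) (hk₀ : 1 ≤ k₀)
    (hrec : ∀ k : ℕ, k₀ ≤ k →
      u (k + 1) ≤ (1 - c / (k : ℝ)) * u k + e / (k : ℝ) + d / (k : ℝ) ^ 2) :
    Filter.limsup u Filter.atTop ≤ e / c :=
  stmt_4_general u hu c d e hc k₀ hrec
end

section
/- Let (u_k) be a sequence of nonnegative reals satisfying, for all k ≥ 1, u_{k+1} ≤ (1 − c/k^s) u_k + e/k^p + d/k^t, where 0 < s < 1, s ≤ p < t, and c, d, e > 0. Then u_k ≤ (e/c)·k^{−(p−s)} + o(k^{−(p−s)}); in particular limsup_{k→∞} k^{p−s} u_k ≤ e/c. -/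
open Filter

/-- `(1+x)^n ≤ 1 + (2^n - 1) x` for `x ∈ [0,1]`. -/
lemma chung_pow_aux (n : ℕ) : ∀ x : ℝ, 0 ≤ x → x ≤ 1 → (1 + x) ^ n ≤ 1 + ((2:ℝ) ^ n - 1) * x := by
  induction n with
  | zero => intro x hx _; simp
  | succ n ih =>
    intro x hx hx1
    have h2 : (1:ℝ) ≤ 2 ^ n := one_le_pow₀ (by norm_num)
    have hih := ih x hx hx1
    have hxx : x * x ≤ x := by nlinarith
    have hps : (2:ℝ) ^ (n+1) = 2 * 2 ^ n := by ring
    calc (1 + x) ^ (n+1) = (1 + x) ^ n * (1 + x) := by ring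
    _ ≤ (1 + ((2:ℝ) ^ n - 1) * x) * (1 + x) := by nlinarith
    _ ≤ 1 + ((2:ℝ) ^ (n+1) - 1) * x := by
        rw [hps]
        nlinarith [mul_le_mul_of_nonneg_left hxx (by linarith : (0:ℝ) ≤ 2 ^ n - 1)]

/-- Core descent lemma: a nonnegative sequence satisfying
`w (k+1) ≤ (1 - a k) * w k + a k * B` with `a k ∈ [0,1]` and divergent `∑ a`
is eventually `≤ B + ε`. -/
lemma chung_core (w a : ℕ → ℝ) (hw : ∀ k, 0 ≤ w k) (B ε : ℝ) (hε : 0 < ε) (N : ℕ)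
    (ha0 : ∀ k, N ≤ k → 0 ≤ a k) (ha1 : ∀ k, N ≤ k → a k ≤ 1)
    (hrec : ∀ k, N ≤ k → w (k+1) ≤ (1 - a k) * w k + a k * B)
    (hdiv : Tendsto (fun n => ∑ j ∈ Finset.range n, a (N + j)) atTop atTop) :
    ∀ᶠ k in atTop, w k ≤ B + ε := by
  -- first, there is some K ≥ N with w K ≤ B + ε
  have exK : ∃ K, N ≤ K ∧ w K ≤ B + ε := by
    by_contra h
    push_neg at h
    have hstep : ∀ k, N ≤ k → w (k+1) ≤ w k - a k * ε := by
      intro k hk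
      have h1 := hrec k hk
      have h2 := h k hk
      have h3 := ha0 k hk
      nlinarith
    have hind : ∀ n, w (N + n) ≤ w N - ε * ∑ j ∈ Finset.range n, a (N + j) := by
      intro n
      induction n with
      | zero => simp
      | succ n ih =>
        have hs := hstep (N + n) (Nat.le_add_right _ _)
        rw [Finset.sum_range_succ]
        have h4 : w (N + n + 1) ≤ w N - ε * ∑ j ∈ Finset.range n, a (N + j) - a (N + n) * ε := by
          linarith
        calc w (N + (n+1)) = w (N + n + 1) := by ring_nf
        _ ≤ _ := h4
        _ = w N - ε * (∑ j ∈ Finset.range n, a (N + j) + a (N + n)) := by ring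
    obtain ⟨n, hn⟩ := (hdiv.eventually_ge_atTop (w N / ε + 1)).exists
    have hwn := hind n
    have h0 := hw (N + n)
    have hcancel : w N / ε * ε = w N := div_mul_cancel₀ _ (ne_of_gt hε)
    nlinarith [mul_le_mul_of_nonneg_right hn hε.le]
  obtain ⟨K, hKN, hK⟩ := exK
  have stay : ∀ k, K ≤ k → w k ≤ B + ε := by
    intro k hk
    induction k, hk using Nat.le_induction with
    | base => exact hK
    | succ k hk ih =>
      have hNk : N ≤ k := le_trans hKN hk
      have h1 := hrec k hNk
      have h2 := ha0 k hNk
      have h3 := ha1 k hNk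
      nlinarith
  filter_upwards [eventually_ge_atTop K] with k hk using stay k hk

set_option maxHeartbeats 1000000 in
/-- Chung's Lemma 5 variant: if `u_{k+1} ≤ (1 − c/k^s) u_k + e/k^p + d/k^t` with
`0 < s < 1`, `s ≤ p < t`, then `limsup k^{p−s} u_k ≤ e/c`. -/
theorem stmt_5 (u : ℕ → ℝ) (hu : ∀ k, 0 ≤ u k)
    (c d e s p t : ℝ) (hc : 0 < c) (hd : 0 < d) (he : 0 < e)
    (hs0 : 0 < s) (hs1 : s < 1) (hsp : s ≤ p) (hpt : p < t)
    (hrec : ∀ k : ℕ, 1 ≤ k →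
      u (k + 1) ≤ (1 - c / (k : ℝ) ^ s) * u k + e / (k : ℝ) ^ p + d / (k : ℝ) ^ t) :
    Filter.limsup (fun k : ℕ => (k : ℝ) ^ (p - s) * u k) Filter.atTop ≤ e / c := by
  set r := p - s with hr
  have hr0 : 0 ≤ r := by rw [hr]; linarith
  set v : ℕ → ℝ := fun k => (k : ℝ) ^ r * u k with hv
  have hv0 : ∀ k, 0 ≤ v k := fun k =>
    mul_nonneg (Real.rpow_nonneg (Nat.cast_nonneg k) r) (hu k)
  -- it suffices to show: for every ε > 0, eventually v k ≤ e/c + ε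
  have key : ∀ ε : ℝ, 0 < ε → ∀ᶠ k in atTop, v k ≤ e / c + ε := by
    intro ε hε
    set n := ⌈r⌉₊ with hn
    set C : ℝ := 2 ^ n - 1 with hC
    have hC0 : 0 ≤ C := by
      have : (1:ℝ) ≤ 2 ^ n := one_le_pow₀ (by norm_num)
      rw [hC]; linarith
    set B : ℝ := e / c + ε / 2 with hB
    have hB0 : 0 < B := by positivity
    set c' : ℝ := (e + c * ε / 4) / B with hc'
    have hc'0 : 0 < c' := by positivity
    have hc'B : c' * B = e + c * ε / 4 := div_mul_cancel₀ _ (ne_of_gt hB0)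
    have hc'c : c' < c := by
      rw [hc', div_lt_iff₀ hB0, hB]
      have : c * (e / c) = e := mul_div_cancel₀ _ (ne_of_gt hc)
      nlinarith
    -- tendsto facts
    have hks : Tendsto (fun k : ℕ => ((k:ℝ) ^ s)) atTop atTop :=
      (tendsto_rpow_atTop hs0).comp tendsto_natCast_atTop_atTop
    have hinv : Tendsto (fun k : ℕ => ((k:ℝ) ^ s)⁻¹) atTop (nhds 0) :=
      hks.inv_tendsto_atTop
    -- E1 : c / k^s ≤ 1 eventually
    have E1 : ∀ᶠ k : ℕ in atTop, c / (k:ℝ) ^ s ≤ 1 := by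
      have h1 : Tendsto (fun k : ℕ => c / (k:ℝ) ^ s) atTop (nhds 0) := by
        simpa [div_eq_mul_inv] using hinv.const_mul c
      exact h1.eventually_le_const (by norm_num : (0:ℝ) < 1)
    -- E2 : C ≤ (c - c') * k ^ (1 - s) eventually
    have E2 : ∀ᶠ k : ℕ in atTop, C ≤ (c - c') * (k:ℝ) ^ (1 - s) := by
      have h1 : Tendsto (fun k : ℕ => (c - c') * (k:ℝ) ^ (1-s)) atTop atTop :=
        (((tendsto_rpow_atTop (by linarith : (0:ℝ) < 1 - s)).comp
          tendsto_natCast_atTop_atTop)).const_mul_atTop (by linarith)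
      exact h1.eventually_ge_atTop C
    -- E3 : (1 + C/k) * (e + d / k^(t-p)) ≤ c' * B eventually
    have E3 : ∀ᶠ k : ℕ in atTop,
        (1 + C / (k:ℝ)) * (e + d / (k:ℝ) ^ (t - p)) ≤ c' * B := by
      have h1 : Tendsto (fun k : ℕ => 1 + C / (k:ℝ)) atTop (nhds 1) := by
        have h0 : Tendsto (fun k : ℕ => C / (k:ℝ)) atTop (nhds 0) := by
          simpa [div_eq_mul_inv] using (tendsto_natCast_atTop_atTop
            (R := ℝ)).inv_tendsto_atTop.const_mul C
        simpa using (tendsto_const_nhds (x := (1:ℝ)) (f := atTop)).add h0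
      have h2 : Tendsto (fun k : ℕ => e + d / (k:ℝ) ^ (t - p)) atTop (nhds e) := by
        have h0 : Tendsto (fun k : ℕ => d / (k:ℝ) ^ (t-p)) atTop (nhds 0) := by
          simpa [div_eq_mul_inv] using ((tendsto_rpow_atTop (by linarith : (0:ℝ) < t - p)).comp
            (tendsto_natCast_atTop_atTop (R := ℝ))).inv_tendsto_atTop.const_mul d
        simpa using (tendsto_const_nhds (x := e) (f := atTop)).add h0
      have h3 : Tendsto (fun k : ℕ => (1 + C/(k:ℝ)) * (e + d / (k:ℝ) ^ (t-p))) atTop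
          (nhds e) := by simpa using h1.mul h2
      have he' : e < c' * B := by rw [hc'B]; nlinarith
      exact h3.eventually_le_const he'
    obtain ⟨N₀, hN₀⟩ := eventually_atTop.mp (E1.and (E2.and E3))
    set N := max N₀ 1 with hN
    -- the key recursion for v
    have hvrec : ∀ k, N ≤ k → v (k+1) ≤ (1 - c' / (k:ℝ)^s) * v k + (c' / (k:ℝ)^s) * B := by
      intro k hk
      obtain ⟨e1, e2, e3⟩ := hN₀ k (le_trans (le_max_left _ _) hk)
      have hk1 : 1 ≤ k := le_trans (le_max_right _ _) hk
      have hK1 : (1:ℝ) ≤ (k:ℝ) := by exact_mod_cast hk1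
      have hK0 : (0:ℝ) < (k:ℝ) := by linarith
      have hKs : (0:ℝ) < (k:ℝ) ^ s := Real.rpow_pos_of_pos hK0 s
      have hKp : (0:ℝ) < (k:ℝ) ^ p := Real.rpow_pos_of_pos hK0 p
      have hKt : (0:ℝ) < (k:ℝ) ^ t := Real.rpow_pos_of_pos hK0 t
      have hKtp : (0:ℝ) < (k:ℝ) ^ (t-p) := Real.rpow_pos_of_pos hK0 (t-p)
      -- (k+1)^r ≤ k^r * (1 + C/k)
      have key1 : ((k:ℝ) + 1) ^ r ≤ (k:ℝ) ^ r * (1 + C / (k:ℝ)) := by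
        have hsplit : (k:ℝ) + 1 = (k:ℝ) * (1 + 1/(k:ℝ)) := by field_simp
        rw [hsplit, Real.mul_rpow hK0.le (by positivity)]
        apply mul_le_mul_of_nonneg_left _ (Real.rpow_nonneg hK0.le r)
        have hbase : (1:ℝ) ≤ 1 + 1/(k:ℝ) := by
          have : 0 < 1/(k:ℝ) := by positivity
          linarith
        have h1 : (1 + 1/(k:ℝ)) ^ r ≤ (1 + 1/(k:ℝ)) ^ (n:ℝ) :=
          Real.rpow_le_rpow_of_exponent_le hbase (Nat.le_ceil r)
        have h2 : (1 + 1/(k:ℝ)) ^ (n:ℝ) = (1 + 1/(k:ℝ)) ^ n := Real.rpow_natCast _ n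
        have h3 : (1 + 1/(k:ℝ)) ^ n ≤ 1 + C * (1/(k:ℝ)) :=
          chung_pow_aux n _ (by positivity) (by rw [div_le_one hK0]; exact hK1)
        calc (1 + 1/(k:ℝ)) ^ r ≤ (1 + 1/(k:ℝ)) ^ n := h2 ▸ h1
        _ ≤ 1 + C * (1/(k:ℝ)) := h3
        _ = 1 + C / (k:ℝ) := by ring
      -- the RHS of the recursion for u is nonnegative
      have hcoeff0 : 0 ≤ 1 - c / (k:ℝ)^s := by linarith [e1]
      have hRHS0 : 0 ≤ (1 - c/(k:ℝ)^s) * u k + e/(k:ℝ)^p + d/(k:ℝ)^t := by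
        have h1 := mul_nonneg hcoeff0 (hu k)
        have h2 : 0 < e/(k:ℝ)^p := by positivity
        have h3 : 0 < d/(k:ℝ)^t := by positivity
        linarith
      have step1 : v (k+1) ≤ ((k:ℝ)+1) ^ r *
          ((1 - c/(k:ℝ)^s) * u k + e/(k:ℝ)^p + d/(k:ℝ)^t) := by
        have hcast : ((k+1 : ℕ) : ℝ) = (k:ℝ) + 1 := by push_cast; ring
        rw [hv]
        simp only [hcast]
        exact mul_le_mul_of_nonneg_left (hrec k hk1) (Real.rpow_nonneg (by positivity) r)
      have step2 : ((k:ℝ)+1) ^ r *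
          ((1 - c/(k:ℝ)^s) * u k + e/(k:ℝ)^p + d/(k:ℝ)^t) ≤
          (k:ℝ)^r * (1 + C/(k:ℝ)) *
          ((1 - c/(k:ℝ)^s) * u k + e/(k:ℝ)^p + d/(k:ℝ)^t) :=
        mul_le_mul_of_nonneg_right key1 hRHS0
      -- rpow arithmetic
      have h1' : (k:ℝ)^r * ((k:ℝ)^p)⁻¹ = ((k:ℝ)^s)⁻¹ := by
        rw [← Real.rpow_neg hK0.le, ← Real.rpow_add hK0,
          show r + -p = -s by rw [hr]; ring, Real.rpow_neg hK0.le]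
      have h2' : (k:ℝ)^r * ((k:ℝ)^t)⁻¹ = ((k:ℝ)^(t-p))⁻¹ * ((k:ℝ)^s)⁻¹ := by
        rw [← Real.rpow_neg hK0.le, ← Real.rpow_add hK0,
          show r + -t = -((t-p) + s) by rw [hr]; ring, Real.rpow_neg hK0.le,
          Real.rpow_add hK0, mul_inv]
      have expand : (k:ℝ)^r * (1 + C/(k:ℝ)) *
          ((1 - c/(k:ℝ)^s) * u k + e/(k:ℝ)^p + d/(k:ℝ)^t) =
          (1 + C/(k:ℝ)) * (1 - c/(k:ℝ)^s) * v k +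
          ((1 + C/(k:ℝ)) * (e + d/(k:ℝ)^(t-p))) / (k:ℝ)^s := by
        rw [hv]
        simp only [div_eq_mul_inv]
        linear_combination (1 + C * ((k:ℝ))⁻¹) * e * h1' + (1 + C * ((k:ℝ))⁻¹) * d * h2'
      -- coefficient bound
      have hcoeff : (1 + C/(k:ℝ)) * (1 - c/(k:ℝ)^s) ≤ 1 - c'/(k:ℝ)^s := by
        have hCk : C/(k:ℝ) ≤ (c - c')/(k:ℝ)^s := by
          rw [div_le_div_iff₀ hK0 hKs]
          have hks1 : (k:ℝ)^(1-s) * (k:ℝ)^s = (k:ℝ) := by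
            rw [← Real.rpow_add hK0]; simp
          calc C * (k:ℝ)^s ≤ ((c - c') * (k:ℝ)^(1-s)) * (k:ℝ)^s :=
                mul_le_mul_of_nonneg_right e2 hKs.le
          _ = (c - c') * (k:ℝ) := by rw [mul_assoc, hks1]
        have hpos : 0 ≤ (C/(k:ℝ)) * (c/(k:ℝ)^s) := by positivity
        have hsplit : (c - c')/(k:ℝ)^s = c/(k:ℝ)^s - c'/(k:ℝ)^s := sub_div _ _ _
        calc (1 + C/(k:ℝ)) * (1 - c/(k:ℝ)^s)
            = 1 - c/(k:ℝ)^s + C/(k:ℝ) - (C/(k:ℝ)) * (c/(k:ℝ)^s) := by ring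
        _ ≤ 1 - c'/(k:ℝ)^s := by linarith
      have herr : ((1 + C/(k:ℝ)) * (e + d/(k:ℝ)^(t-p))) / (k:ℝ)^s ≤
          (c'/(k:ℝ)^s) * B := by
        rw [div_mul_eq_mul_div]
        exact (div_le_div_iff_of_pos_right hKs).mpr e3
      have hcv : (1 + C/(k:ℝ)) * (1 - c/(k:ℝ)^s) * v k ≤ (1 - c'/(k:ℝ)^s) * v k :=
        mul_le_mul_of_nonneg_right hcoeff (hv0 k)
      calc v (k+1) ≤ _ := step1
      _ ≤ _ := step2
      _ = _ := expand
      _ ≤ (1 - c'/(k:ℝ)^s) * v k + (c'/(k:ℝ)^s) * B := add_le_add hcv herr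
    -- divergence of ∑ c'/(N+j)^s
    have hdiv : Tendsto (fun m => ∑ j ∈ Finset.range m, c' / ((N + j : ℕ):ℝ)^s)
        atTop atTop := by
      have hnonneg : ∀ j : ℕ, 0 ≤ c' / ((N + j : ℕ):ℝ)^s := fun j => by positivity
      rw [← not_summable_iff_tendsto_nat_atTop_of_nonneg hnonneg]
      intro hsumm
      have h1 : Summable (fun j : ℕ => (((N + j : ℕ):ℝ)^s)⁻¹) := by
        have h0 := hsumm.div_const c'
        refine h0.congr fun j => ?_
        field_simp
      have h2 : Summable (fun j : ℕ => ((j:ℝ)^s)⁻¹) := by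
        refine (summable_nat_add_iff N).mp (h1.congr fun j => ?_)
        rw [Nat.add_comm]
      rw [Real.summable_nat_rpow_inv] at h2
      linarith
    -- apply the core lemma
    have hfin := chung_core v (fun k => c' / (k:ℝ)^s) hv0 B (ε/2) (by linarith) N
      (fun k _ => by positivity)
      (fun k hk => by
        have hk1 : 1 ≤ k := le_trans (le_max_right _ _) hk
        obtain ⟨e1, _, _⟩ := hN₀ k (le_trans (le_max_left _ _) hk)
        have hK0 : (0:ℝ) < (k:ℝ) := by exact_mod_cast hk1
        have hKs : (0:ℝ) < (k:ℝ) ^ s := Real.rpow_pos_of_pos hK0 s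
        calc c' / (k:ℝ)^s ≤ c / (k:ℝ)^s := by gcongr
        _ ≤ 1 := e1)
      hvrec hdiv
    filter_upwards [hfin] with k hk
    calc v k ≤ B + ε/2 := hk
    _ = e/c + ε := by rw [hB]; ring
  -- conclude about limsup
  have hbdd : IsCoboundedUnder (· ≤ ·) atTop v :=
    isCoboundedUnder_le_of_le atTop (x := 0) hv0
  have hle : ∀ ε : ℝ, 0 < ε → Filter.limsup v atTop ≤ e/c + ε := fun ε hε =>
    limsup_le_of_le hbdd (key ε hε)
  by_contra hcon
  push_neg at hcon
  have hεpos : 0 < (Filter.limsup v atTop - e/c) / 2 := by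
    have : Filter.limsup (fun k : ℕ => (k : ℝ) ^ (p - s) * u k) Filter.atTop
        = Filter.limsup v atTop := rfl
    rw [this] at hcon
    linarith
  have := hle _ hεpos
  have hconv : e / c < Filter.limsup v atTop := hcon
  linarith
end

section
/- Let each f_i be convex, twice continuously differentiable with β_i-Lipschitz gradient, f = ∑_i f_i μ-strongly convex with ∑_i ∇²f_i(w) ⪯ βI where β = ∑_i β_i. Let S, weights γ_j, ε be as in CRAIG with ‖∑_{i∈V}∇f_i(w) − ∑_{j∈S}γ_j∇f_j(w)‖ ≤ ε for all w, and suppose ‖γ_j∇f_j(w)‖ ≤ γ_max C. Then one epoch of IG on S with stepsize α_k ≤ 1/β satisfies ‖w_{k+1} − w*‖ ≤ (1 − α_k μ)‖w_k − w*‖ + 2α_k ε + α_k² β C r γ_max². -/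
open Finset
open scoped RealInnerProductSpace

section Aux

variable {E : Type*} [NormedAddCommGroup E] [InnerProductSpace ℝ E]

lemma craig_inner_antisym_aux (a b x y : E) :
    ⟪a, y - x⟫ + ⟪b, x - y⟫ = -⟪b - a, y - x⟫ := by
  rw [inner_sub_left, show (x - y : E) = -(y - x) by abel, inner_neg_right]
  ring

lemma craig_sum_fin_eq {M : Type*} [AddCommMonoid M] {ι : Type*} {S : Finset ι} {r : ℕ}
    (hr : S.card = r) (e : Fin r → ι) (he : ∀ p, e p ∈ S) (heinj : Function.Injective e)
    (φ : ι → M) : ∑ p : Fin r, φ (e p) = ∑ j ∈ S, φ j := by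
  refine Finset.sum_bij (fun (p : Fin r) (_ : p ∈ Finset.univ) => e p)
    (fun p _ => he p) (fun p _ q _ h => heinj h) ?_ (fun p _ => rfl)
  intro b hb
  obtain ⟨a, ha, hab⟩ := Finset.surj_on_of_inj_on_of_card_le
    (fun (p : Fin r) (_ : p ∈ Finset.univ) => e p) (fun p _ => he p)
    (fun p q _ _ h => heinj h) (by simp [hr]) b hb
  exact ⟨a, ha, hab.symm⟩

lemma craig_inner_gradient_eq [CompleteSpace E] {f : E → ℝ} {x : E}
    (hf : DifferentiableAt ℝ f x) (v : E) :
    fderiv ℝ f x v = ⟪gradient f x, v⟫ := by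
  have h := hf.hasGradientAt.hasFDerivAt
  rw [h.fderiv, InnerProductSpace.toDual_apply_apply]

lemma craig_descent_lemma [CompleteSpace E] {f : E → ℝ} (hf : ContDiff ℝ 2 f) {L : ℝ}
    (hlip : ∀ u v, ‖gradient f u - gradient f v‖ ≤ L * ‖u - v‖) (x y : E) :
    f y ≤ f x + ⟪gradient f x, y - x⟫ + L / 2 * ‖y - x‖ ^ 2 := by
  have hdiff : Differentiable ℝ f := hf.differentiable two_ne_zero
  set v := y - x with hv
  have hp : ∀ t : ℝ, HasDerivAt (fun t : ℝ => x + t • v) v t := by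
    intro t
    simpa using ((hasDerivAt_id t).smul_const v).const_add x
  have hφ : ∀ t : ℝ, HasDerivAt (fun t : ℝ => f (x + t • v))
      ⟪gradient f (x + t • v), v⟫ t := by
    intro t
    have h1 := ((hdiff (x + t • v)).hasGradientAt.hasFDerivAt).comp_hasDerivAt t (hp t)
    simpa [InnerProductSpace.toDual_apply_apply, Function.comp_def] using h1
  set ψ : ℝ → ℝ := fun t => f (x + t • v) - t * ⟪gradient f x, v⟫ - L / 2 * ‖v‖ ^ 2 * t ^ 2
    with hψdef
  have hψ : ∀ t : ℝ, HasDerivAt ψ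
      (⟪gradient f (x + t • v), v⟫ - ⟪gradient f x, v⟫ - L / 2 * ‖v‖ ^ 2 * (2 * t)) t := by
    intro t
    exact ((hφ t).sub ((hasDerivAt_id t).mul_const _ |>.congr_deriv (one_mul _))).sub
      (((hasDerivAt_pow 2 t).const_mul (L / 2 * ‖v‖ ^ 2)).congr_deriv (by ring))
  have hanti : AntitoneOn ψ (Set.Icc (0:ℝ) 1) := by
    apply antitoneOn_of_deriv_nonpos (convex_Icc 0 1)
    · exact fun t _ => ((hψ t).continuousAt).continuousWithinAt
    · exact fun t _ => ((hψ t).differentiableAt).differentiableWithinAt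
    · intro t ht
      rw [interior_Icc] at ht
      rw [(hψ t).deriv]
      have h2 : ⟪gradient f (x + t • v) - gradient f x, v⟫
          ≤ ‖gradient f (x + t • v) - gradient f x‖ * ‖v‖ := real_inner_le_norm _ _
      have h3 : ‖gradient f (x + t • v) - gradient f x‖ ≤ L * (t * ‖v‖) := by
        have := hlip (x + t • v) x
        simpa [norm_smul, abs_of_nonneg ht.1.le] using this
      have h4 : ⟪gradient f (x + t • v) - gradient f x, v⟫
          = ⟪gradient f (x + t • v), v⟫ - ⟪gradient f x, v⟫ := inner_sub_left _ _ _
      nlinarith [norm_nonneg v, ht.1.le]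
  have h01 := hanti (Set.left_mem_Icc.2 zero_le_one) (Set.right_mem_Icc.2 zero_le_one)
    zero_le_one
  have e0 : ψ 0 = f x := by simp [hψdef]
  have e1 : ψ 1 = f y - ⟪gradient f x, v⟫ - L / 2 * ‖v‖ ^ 2 := by
    have : x + v = y := by rw [hv]; abel
    simp [hψdef, this]
  rw [e0, e1] at h01
  linarith

/-- Co-coercivity of a convex function with a descent property of constant `K > 0`. -/
lemma craig_cocoercive {H : E → ℝ} {GH : E → E} {K : ℝ} (hK : 0 < K)
    (hconv : ∀ x y, H x + ⟪GH x, y - x⟫ ≤ H y)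
    (hdesc : ∀ x y, H y ≤ H x + ⟪GH x, y - x⟫ + K / 2 * ‖y - x‖ ^ 2) (x y : E) :
    ‖GH y - GH x‖ ^ 2 ≤ K * ⟪GH y - GH x, y - x⟫ := by
  have step : ∀ a b : E, H a + ⟪GH a, b - a⟫ + 1 / (2 * K) * ‖GH b - GH a‖ ^ 2 ≤ H b := by
    intro a b
    have h1 := hconv a (b - (1 / K) • (GH b - GH a))
    have h2 := hdesc b (b - (1 / K) • (GH b - GH a))
    have e1 : ⟪GH a, b - (1 / K) • (GH b - GH a) - a⟫
        = ⟪GH a, b - a⟫ - (1 / K) * ⟪GH a, GH b - GH a⟫ := by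
      rw [sub_right_comm, inner_sub_right, real_inner_smul_right]
    have e2 : ⟪GH b, b - (1 / K) • (GH b - GH a) - b⟫
        = -((1 / K) * ⟪GH b, GH b - GH a⟫) := by
      rw [sub_sub_cancel_left, inner_neg_right, real_inner_smul_right]
    have e3 : ‖b - (1 / K) • (GH b - GH a) - b‖ ^ 2 = (1 / K) ^ 2 * ‖GH b - GH a‖ ^ 2 := by
      rw [sub_sub_cancel_left, norm_neg, norm_smul, mul_pow, Real.norm_eq_abs, sq_abs]
    have e4 : ⟪GH b, GH b - GH a⟫ - ⟪GH a, GH b - GH a⟫ = ‖GH b - GH a‖ ^ 2 := by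
      rw [← inner_sub_left, real_inner_self_eq_norm_sq]
    rw [e1] at h1
    rw [e2, e3] at h2
    have hK' : K ≠ 0 := ne_of_gt hK
    have comb := le_trans h1 h2
    have e5 : K / 2 * ((1 / K) ^ 2 * ‖GH b - GH a‖ ^ 2) = 1 / (2 * K) * ‖GH b - GH a‖ ^ 2 := by
      field_simp
    rw [e5] at comb
    have e7 : (1 / K) * ⟪GH b, GH b - GH a⟫ - (1 / K) * ⟪GH a, GH b - GH a⟫
        = (1 / K) * ‖GH b - GH a‖ ^ 2 := by rw [← mul_sub, e4]
    have e8 : (1 / K) * ‖GH b - GH a‖ ^ 2 - 1 / (2 * K) * ‖GH b - GH a‖ ^ 2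
        = 1 / (2 * K) * ‖GH b - GH a‖ ^ 2 := by field_simp; ring
    linarith
  have hs1 := step x y
  have hs2 := step y x
  have e6 := craig_inner_antisym_aux (GH x) (GH y) x y
  have e7 : ‖GH x - GH y‖ = ‖GH y - GH x‖ := norm_sub_rev _ _
  rw [e7] at hs2
  have hsum : (1 / K) * ‖GH y - GH x‖ ^ 2 ≤ ⟪GH y - GH x, y - x⟫ := by
    have heq : 1 / (2 * K) * ‖GH y - GH x‖ ^ 2 + 1 / (2 * K) * ‖GH y - GH x‖ ^ 2
        = (1 / K) * ‖GH y - GH x‖ ^ 2 := by field_simp; ring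
    linarith
  calc ‖GH y - GH x‖ ^ 2 = K * ((1 / K) * ‖GH y - GH x‖ ^ 2) := by field_simp
    _ ≤ K * ⟪GH y - GH x, y - x⟫ := mul_le_mul_of_nonneg_left hsum hK.le

/-- Contraction of the exact gradient step for a `μ`-strongly convex, `β`-smooth function. -/
lemma craig_contraction {F : E → ℝ} {GF : E → E} {μ β α : ℝ} (hμ : 0 < μ) (hμβ : μ ≤ β)
    (hα0 : 0 < α) (hαβ : α * β ≤ 1)
    (hsc : ∀ x y, F x + ⟪GF x, y - x⟫ + μ / 2 * ‖y - x‖ ^ 2 ≤ F y)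
    (hdesc : ∀ x y, F y ≤ F x + ⟪GF x, y - x⟫ + β / 2 * ‖y - x‖ ^ 2)
    {w0 ws : E} (hws : GF ws = 0) :
    ‖w0 - α • GF w0 - ws‖ ≤ (1 - α * μ) * ‖w0 - ws‖ := by
  have key : ∀ x y : E, μ / 2 * ‖y‖ ^ 2 - μ / 2 * ‖x‖ ^ 2 - μ * ⟪x, y - x⟫
      = μ / 2 * ‖y - x‖ ^ 2 := by
    intro x y
    rw [inner_sub_right]
    nlinarith [norm_sub_sq_real y x, real_inner_comm x y,
      real_inner_self_eq_norm_sq x]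
  have hGHinner : ∀ x y : E, ⟪GF x - μ • x, y - x⟫ = ⟪GF x, y - x⟫ - μ * ⟪x, y - x⟫ := by
    intro x y
    rw [inner_sub_left, real_inner_smul_left]
  have hconvH : ∀ x y : E, (F x - μ / 2 * ‖x‖ ^ 2) + ⟪GF x - μ • x, y - x⟫
      ≤ F y - μ / 2 * ‖y‖ ^ 2 := by
    intro x y
    rw [hGHinner]
    nlinarith [key x y, hsc x y]
  have hdescH : ∀ x y : E, F y - μ / 2 * ‖y‖ ^ 2 ≤ (F x - μ / 2 * ‖x‖ ^ 2)
      + ⟪GF x - μ • x, y - x⟫ + (β - μ) / 2 * ‖y - x‖ ^ 2 := by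
    intro x y
    rw [hGHinner]
    nlinarith [key x y, hdesc x y]
  have hmono : ∀ x y : E, (0:ℝ) ≤ ⟪(GF y - μ • y) - (GF x - μ • x), y - x⟫ := by
    intro x y
    have h1 := hconvH x y
    have h2 := hconvH y x
    have e6 := craig_inner_antisym_aux (GF x - μ • x) (GF y - μ • y) x y
    linarith
  have hcoco : ∀ x y : E, ‖(GF y - μ • y) - (GF x - μ • x)‖ ^ 2
      ≤ (β - μ) * ⟪(GF y - μ • y) - (GF x - μ • x), y - x⟫ := by
    intro x y
    have hlim : ∀ ε > (0:ℝ), ‖(GF y - μ • y) - (GF x - μ • x)‖ ^ 2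
        ≤ (β - μ) * ⟪(GF y - μ • y) - (GF x - μ • x), y - x⟫ + ε := by
      intro ε hε
      have hc0 : (0:ℝ) ≤ ⟪(GF y - μ • y) - (GF x - μ • x), y - x⟫ := hmono x y
      set c := ⟪(GF y - μ • y) - (GF x - μ • x), y - x⟫ with hc
      have hδ0 : 0 < ε / (c + 1) := div_pos hε (by linarith)
      have hK : 0 < (β - μ) + ε / (c + 1) := by linarith [sub_nonneg.2 hμβ]
      have hdescK : ∀ a b : E, F b - μ / 2 * ‖b‖ ^ 2 ≤ (F a - μ / 2 * ‖a‖ ^ 2)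
          + ⟪GF a - μ • a, b - a⟫ + ((β - μ) + ε / (c + 1)) / 2 * ‖b - a‖ ^ 2 := by
        intro a b
        nlinarith [hdescH a b, sq_nonneg ‖b - a‖, hδ0.le]
      have hcc := craig_cocoercive hK hconvH hdescK x y
      have hδc : (ε / (c + 1)) * c ≤ ε := by
        rw [div_mul_eq_mul_div, div_le_iff₀ (by linarith : (0:ℝ) < c + 1)]
        nlinarith
      nlinarith
    exact le_of_forall_pos_le_add hlim
  have hBraw := hcoco ws w0
  have hGHd : (GF w0 - μ • w0) - (GF ws - μ • ws) = GF w0 - μ • (w0 - ws) := by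
    rw [hws, smul_sub]; abel
  rw [hGHd] at hBraw
  have hg : μ * ‖w0 - ws‖ ^ 2 ≤ ⟪GF w0, w0 - ws⟫ := by
    have h1 := hsc w0 ws
    have h2 := hsc ws w0
    rw [hws] at h2
    have e8 : ⟪GF w0, ws - w0⟫ = -⟪GF w0, w0 - ws⟫ := by
      rw [show (ws - w0 : E) = -(w0 - ws) by abel, inner_neg_right]
    have e9 : ‖ws - w0‖ = ‖w0 - ws‖ := norm_sub_rev _ _
    have e10 : ⟪(0:E), w0 - ws⟫ = (0:ℝ) := inner_zero_left _
    rw [e8, e9] at h1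
    rw [e10] at h2
    nlinarith
  have hBexp : ‖GF w0 - μ • (w0 - ws)‖ ^ 2
      = ‖GF w0‖ ^ 2 - 2 * μ * ⟪GF w0, w0 - ws⟫ + μ ^ 2 * ‖w0 - ws‖ ^ 2 := by
    rw [norm_sub_sq_real, real_inner_smul_right, norm_smul, Real.norm_eq_abs, mul_pow, sq_abs]
    ring
  have hBinner : ⟪GF w0 - μ • (w0 - ws), w0 - ws⟫
      = ⟪GF w0, w0 - ws⟫ - μ * ‖w0 - ws‖ ^ 2 := by
    rw [inner_sub_left, real_inner_smul_left, real_inner_self_eq_norm_sq]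
  rw [hBexp, hBinner] at hBraw
  have hΔsq : ‖GF w0‖ ^ 2 ≤ (β + μ) * ⟪GF w0, w0 - ws⟫ - β * μ * ‖w0 - ws‖ ^ 2 := by
    nlinarith
  have hnorm : ‖(w0 - ws) - α • GF w0‖ ^ 2
      = ‖w0 - ws‖ ^ 2 - 2 * α * ⟪GF w0, w0 - ws⟫ + α ^ 2 * ‖GF w0‖ ^ 2 := by
    rw [norm_sub_sq_real, real_inner_smul_right, norm_smul, Real.norm_eq_abs, mul_pow, sq_abs,
      real_inner_comm (w0 - ws) (GF w0)]
    ring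
  have hαμ : α * μ ≤ 1 := le_trans (by nlinarith) hαβ
  have h2αβμ : 0 ≤ 2 - α * (β + μ) := by nlinarith
  have hsq : ‖(w0 - ws) - α • GF w0‖ ^ 2 ≤ ((1 - α * μ) * ‖w0 - ws‖) ^ 2 := by
    rw [hnorm]
    nlinarith [mul_le_mul_of_nonneg_left hΔsq (sq_nonneg α),
      mul_nonneg (mul_nonneg hα0.le h2αβμ) (sub_nonneg.2 hg)]
  have h1 : 0 ≤ (1 - α * μ) * ‖w0 - ws‖ := mul_nonneg (by linarith) (norm_nonneg _)
  have hfinal := Real.sqrt_le_sqrt hsq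
  rw [Real.sqrt_sq (norm_nonneg _), Real.sqrt_sq h1] at hfinal
  rw [show w0 - α • GF w0 - ws = (w0 - ws) - α • GF w0 by abel]
  exact hfinal

end Aux

/-- Per-epoch recursion of CRAIG Theorem 2 (smooth strongly convex case):
one epoch of IG on an ε-coreset with stepsize `α ≤ 1/β` satisfies
`‖w_{k+1} − w*‖ ≤ (1 − α μ)‖w_k − w*‖ + 2 α ε + α² β C r γ_max²`. -/
theorem stmt_13 {d : ℕ} {ι : Type*} (V : Finset ι) (S : Finset ι) (hSV : S ⊆ V)
    (r : ℕ) (hr : S.card = r) (e : Fin r → ι)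
    (he : ∀ p, e p ∈ S) (heinj : Function.Injective e)
    (f : ι → EuclideanSpace ℝ (Fin d) → ℝ)
    (hsmooth : ∀ i ∈ V, ContDiff ℝ 2 (f i))
    (hconv : ∀ i ∈ V, ∀ x y, f i y ≥ f i x + ⟪gradient (f i) x, y - x⟫)
    (β : ι → ℝ) (hβ : ∀ i ∈ V, 0 ≤ β i)
    (hlip : ∀ i ∈ V, ∀ u v,
      ‖gradient (f i) u - gradient (f i) v‖ ≤ β i * ‖u - v‖)
    (βtot : ℝ) (hβtot : βtot = ∑ i ∈ V, β i)
    (μ : ℝ) (hμ : 0 < μ)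
    (hsc : ∀ x y, (∑ i ∈ V, f i y) ≥
      (∑ i ∈ V, f i x) + ⟪∑ i ∈ V, gradient (f i) x, y - x⟫ + μ / 2 * ‖y - x‖ ^ 2)
    (γ : ι → ℝ) (hγ : ∀ j ∈ S, 0 ≤ γ j)
    (γmax C : ℝ) (hγmax : ∀ j ∈ S, γ j ≤ γmax) (hC : 0 ≤ C)
    (hwbound : ∀ j ∈ S, ∀ w, ‖γ j • gradient (f j) w‖ ≤ γmax * C)
    (ε : ℝ) (hε : 0 ≤ ε)
    (happrox : ∀ w,
      ‖(∑ i ∈ V, gradient (f i) w) - ∑ j ∈ S, γ j • gradient (f j) w‖ ≤ ε)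
    (wstar : EuclideanSpace ℝ (Fin d))
    (hmin : ∀ w, (∑ i ∈ V, f i wstar) ≤ ∑ i ∈ V, f i w)
    (α : ℝ) (hα0 : 0 < α) (hα : α ≤ 1 / βtot)
    (x : ℕ → EuclideanSpace ℝ (Fin d))
    (hrec : ∀ p : Fin r,
      x (p + 1) = x p - α • (γ (e p) • gradient (f (e p)) (x p))) :
    ‖x r - wstar‖ ≤ (1 - α * μ) * ‖x 0 - wstar‖
      + 2 * α * ε + α ^ 2 * βtot * C * r * γmax ^ 2 := by
  classical
  have hβtot0 : 0 ≤ βtot := hβtot ▸ Finset.sum_nonneg hβ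
  rcases Nat.eq_zero_or_pos d with hd0 | hd
  · -- degenerate zero-dimensional case
    subst hd0
    haveI : Subsingleton (EuclideanSpace ℝ (Fin 0)) :=
      ⟨fun a b => (WithLp.equiv 2 (Fin 0 → ℝ)).injective (Subsingleton.elim _ _)⟩
    have h1 : x r - wstar = 0 := Subsingleton.elim _ _
    have h2 : x 0 - wstar = 0 := Subsingleton.elim _ _
    rw [h1, h2, norm_zero]
    have h3 : 0 ≤ 2 * α * ε := by positivity
    have h4 : 0 ≤ α ^ 2 * βtot * C * (r:ℝ) * γmax ^ 2 := by
      apply mul_nonneg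
      apply mul_nonneg
      apply mul_nonneg
      exact mul_nonneg (sq_nonneg α) hβtot0
      exact hC
      exact Nat.cast_nonneg r
      exact sq_nonneg γmax
    linarith
  -- main case `1 ≤ d`
  have hdiff : ∀ i ∈ V, Differentiable ℝ (f i) :=
    fun i hi => (hsmooth i hi).differentiable two_ne_zero
  -- strong convexity in `≤` form
  have hsc' : ∀ x y : EuclideanSpace ℝ (Fin d),
      (∑ i ∈ V, f i x) + ⟪∑ i ∈ V, gradient (f i) x, y - x⟫ + μ / 2 * ‖y - x‖ ^ 2
        ≤ ∑ i ∈ V, f i y := fun x y => hsc x y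
  -- summed descent lemma
  have hdescF : ∀ x y : EuclideanSpace ℝ (Fin d),
      (∑ i ∈ V, f i y) ≤ (∑ i ∈ V, f i x) + ⟪∑ i ∈ V, gradient (f i) x, y - x⟫
        + βtot / 2 * ‖y - x‖ ^ 2 := by
    intro x y
    have h1 : ∀ i ∈ V, f i y ≤ f i x + ⟪gradient (f i) x, y - x⟫ + β i / 2 * ‖y - x‖ ^ 2 :=
      fun i hi => craig_descent_lemma (hsmooth i hi) (hlip i hi) x y
    have h2 := Finset.sum_le_sum h1
    calc (∑ i ∈ V, f i y)
        ≤ ∑ i ∈ V, (f i x + ⟪gradient (f i) x, y - x⟫ + β i / 2 * ‖y - x‖ ^ 2) := h2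
      _ = (∑ i ∈ V, f i x) + (∑ i ∈ V, ⟪gradient (f i) x, y - x⟫)
          + (∑ i ∈ V, β i / 2 * ‖y - x‖ ^ 2) := by
          rw [Finset.sum_add_distrib, Finset.sum_add_distrib]
      _ = (∑ i ∈ V, f i x) + ⟪∑ i ∈ V, gradient (f i) x, y - x⟫
          + βtot / 2 * ‖y - x‖ ^ 2 := by
          rw [← sum_inner, ← Finset.sum_mul, ← Finset.sum_div, ← hβtot]
  -- Lipschitz property of the total gradient
  have hGFlip : ∀ u v : EuclideanSpace ℝ (Fin d),
      ‖(∑ i ∈ V, gradient (f i) u) - ∑ i ∈ V, gradient (f i) v‖ ≤ βtot * ‖u - v‖ := by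
    intro u v
    rw [← Finset.sum_sub_distrib]
    calc ‖∑ i ∈ V, (gradient (f i) u - gradient (f i) v)‖
        ≤ ∑ i ∈ V, ‖gradient (f i) u - gradient (f i) v‖ := norm_sum_le _ _
      _ ≤ ∑ i ∈ V, β i * ‖u - v‖ := Finset.sum_le_sum fun i hi => hlip i hi u v
      _ = βtot * ‖u - v‖ := by rw [← Finset.sum_mul, ← hβtot]
  -- strong monotonicity of the total gradient
  have hmonoF : ∀ u v : EuclideanSpace ℝ (Fin d),
      μ * ‖v - u‖ ^ 2 ≤ ⟪(∑ i ∈ V, gradient (f i) v) - ∑ i ∈ V, gradient (f i) u, v - u⟫ := by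
    intro u v
    have h1 := hsc' u v
    have h2 := hsc' v u
    have e6 := craig_inner_antisym_aux (∑ i ∈ V, gradient (f i) u)
      (∑ i ∈ V, gradient (f i) v) u v
    have e9 : ‖u - v‖ = ‖v - u‖ := norm_sub_rev _ _
    rw [e9] at h2
    linarith
  -- μ ≤ βtot
  have hμβ : μ ≤ βtot := by
    set v : EuclideanSpace ℝ (Fin d) := EuclideanSpace.single (⟨0, hd⟩ : Fin d) (1:ℝ) with hv
    have hvnorm : ‖v‖ = 1 := by rw [hv, EuclideanSpace.norm_single, norm_one]
    have h1 := hmonoF 0 v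
    have h2 := real_inner_le_norm ((∑ i ∈ V, gradient (f i) v) - ∑ i ∈ V, gradient (f i) 0)
      (v - 0)
    have h3 := hGFlip v 0
    have h4 : ‖v - 0‖ = 1 := by rw [sub_zero, hvnorm]
    rw [h4] at h1 h2
    rw [h4] at h3
    nlinarith
  have hβpos : 0 < βtot := lt_of_lt_of_le hμ hμβ
  have hαβ : α * βtot ≤ 1 := by
    rw [← le_div_iff₀ hβpos] at *
    exact hα
  -- gradient vanishes at the minimizer
  have hGFzero : (∑ i ∈ V, gradient (f i) wstar) = 0 := by
    have hlocal : IsLocalMin (fun w => ∑ i ∈ V, f i w) wstar :=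
      Filter.Eventually.of_forall hmin
    have h0 : fderiv ℝ (fun w => ∑ i ∈ V, f i w) wstar = 0 := hlocal.fderiv_eq_zero
    have hin : ∀ w : EuclideanSpace ℝ (Fin d), ⟪∑ i ∈ V, gradient (f i) wstar, w⟫ = 0 := by
      intro w
      rw [sum_inner]
      have h5 : ∀ i ∈ V, ⟪gradient (f i) wstar, w⟫ = fderiv ℝ (f i) wstar w :=
        fun i hi => (craig_inner_gradient_eq ((hdiff i hi).differentiableAt) w).symm
      rw [Finset.sum_congr rfl h5]
      have h6 : fderiv ℝ (fun w => ∑ i ∈ V, f i w) wstar = ∑ i ∈ V, fderiv ℝ (f i) wstar :=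
        fderiv_fun_sum fun i hi => (hdiff i hi).differentiableAt
      have h7 : ∑ i ∈ V, fderiv ℝ (f i) wstar w
          = (∑ i ∈ V, fderiv ℝ (f i) wstar) w := by
        rw [ContinuousLinearMap.sum_apply]
      rw [h7, ← h6, h0, ContinuousLinearMap.zero_apply]
    have := hin (∑ i ∈ V, gradient (f i) wstar)
    exact inner_self_eq_zero.mp this
  -- contraction of the exact step
  have hcontr : ‖x 0 - α • (∑ i ∈ V, gradient (f i) (x 0)) - wstar‖
      ≤ (1 - α * μ) * ‖x 0 - wstar‖ :=
    craig_contraction hμ hμβ hα0 hαβ hsc' hdescF hGFzero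
  -- step vectors and telescoping
  set u : ℕ → EuclideanSpace ℝ (Fin d) := fun p =>
    if h : p < r then γ (e ⟨p, h⟩) • gradient (f (e ⟨p, h⟩)) (x p) else 0 with hu
  have htel : ∀ n, n ≤ r → x n = x 0 - α • ∑ p ∈ Finset.range n, u p := by
    intro n
    induction n with
    | zero => intro _; simp
    | succ n ih =>
      intro h
      have hn : n < r := Nat.lt_of_succ_le h
      have hx : x (n + 1) = x n - α • (γ (e ⟨n, hn⟩) • gradient (f (e ⟨n, hn⟩)) (x n)) :=
        hrec ⟨n, hn⟩
      have hun : u n = γ (e ⟨n, hn⟩) • gradient (f (e ⟨n, hn⟩)) (x n) := by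
        rw [hu]; simp [hn]
      rw [hx, ← hun, ih (Nat.le_of_lt hn), Finset.sum_range_succ, smul_add]
      abel
  have hunorm : ∀ p, p < r → ‖u p‖ ≤ γmax * C := by
    intro p hp
    have := hwbound (e ⟨p, hp⟩) (he ⟨p, hp⟩) (x p)
    rw [hu]
    simpa [hp] using this
  have hdrift : ∀ p, p ≤ r → ‖x p - x 0‖ ≤ α * p * (γmax * C) := by
    intro p hp
    rw [htel p hp]
    have : x 0 - α • ∑ q ∈ Finset.range p, u q - x 0 = -(α • ∑ q ∈ Finset.range p, u q) := by
      abel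
    rw [this, norm_neg, norm_smul, Real.norm_eq_abs, abs_of_pos hα0]
    calc α * ‖∑ q ∈ Finset.range p, u q‖
        ≤ α * ∑ q ∈ Finset.range p, ‖u q‖ :=
          mul_le_mul_of_nonneg_left (norm_sum_le _ _) hα0.le
      _ ≤ α * ∑ q ∈ Finset.range p, (γmax * C) := by
          apply mul_le_mul_of_nonneg_left _ hα0.le
          exact Finset.sum_le_sum fun q hq =>
            hunorm q (lt_of_lt_of_le (Finset.mem_range.mp hq) hp)
      _ = α * p * (γmax * C) := by
          rw [Finset.sum_const, Finset.card_range, nsmul_eq_mul]; ring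
  -- sums over S vs Fin r
  have hSsum : ∑ p : Fin r, γ (e p) • gradient (f (e p)) (x 0)
      = ∑ j ∈ S, γ j • gradient (f j) (x 0) :=
    craig_sum_fin_eq hr e he heinj (fun j => γ j • gradient (f j) (x 0))
  have hsum_u : ∑ p ∈ Finset.range r, u p
      = ∑ p : Fin r, γ (e p) • gradient (f (e p)) (x p) := by
    rw [← Fin.sum_univ_eq_sum_range]
    refine Finset.sum_congr rfl fun p _ => ?_
    rw [hu]
    simp [p.isLt]
  -- decomposition
  have hdecomp : x r - wstar
      = (x 0 - α • (∑ i ∈ V, gradient (f i) (x 0)) - wstar)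
        + α • ((∑ i ∈ V, gradient (f i) (x 0)) - ∑ j ∈ S, γ j • gradient (f j) (x 0))
        + α • (∑ p : Fin r, (γ (e p) • gradient (f (e p)) (x 0)
            - γ (e p) • gradient (f (e p)) (x p))) := by
    rw [htel r le_rfl, hsum_u, Finset.sum_sub_distrib, hSsum, smul_sub, smul_sub]
    abel
  -- bound on the drift term
  have hthird : ‖∑ p : Fin r, (γ (e p) • gradient (f (e p)) (x 0)
      - γ (e p) • gradient (f (e p)) (x p))‖ ≤ α * βtot * C * r * γmax ^ 2 := by
    rcases Nat.eq_zero_or_pos r with hr0 | hrpos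
    · subst hr0
      simp
    · obtain ⟨j0, hj0⟩ := Finset.card_pos.mp (hr ▸ hrpos)
      have hγmax0 : 0 ≤ γmax := le_trans (hγ j0 hj0) (hγmax j0 hj0)
      have hγC0 : 0 ≤ γmax * C := le_trans (norm_nonneg _) (hwbound j0 hj0 (x 0))
      have hterm : ∀ p : Fin r, ‖γ (e p) • gradient (f (e p)) (x 0)
          - γ (e p) • gradient (f (e p)) (x p)‖
          ≤ γmax * (β (e p) * (α * r * (γmax * C))) := by
        intro p
        rw [← smul_sub, norm_smul, Real.norm_eq_abs, abs_of_nonneg (hγ (e p) (he p))]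
        have hlp := hlip (e p) (hSV (he p)) (x 0) (x p)
        have hdr : ‖x 0 - x p‖ ≤ α * r * (γmax * C) := by
          rw [norm_sub_rev]
          calc ‖x p - x 0‖ ≤ α * p * (γmax * C) := hdrift p p.isLt.le
            _ ≤ α * r * (γmax * C) := by
                apply mul_le_mul_of_nonneg_right _ hγC0
                apply mul_le_mul_of_nonneg_left _ hα0.le
                exact_mod_cast p.isLt.le
        have hβp : 0 ≤ β (e p) := hβ (e p) (hSV (he p))
        have h1 : ‖gradient (f (e p)) (x 0) - gradient (f (e p)) (x p)‖
            ≤ β (e p) * (α * r * (γmax * C)) :=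
          le_trans hlp (mul_le_mul_of_nonneg_left hdr hβp)
        exact mul_le_mul (hγmax (e p) (he p)) h1 (norm_nonneg _) hγmax0
      calc ‖∑ p : Fin r, (γ (e p) • gradient (f (e p)) (x 0)
            - γ (e p) • gradient (f (e p)) (x p))‖
          ≤ ∑ p : Fin r, ‖γ (e p) • gradient (f (e p)) (x 0)
            - γ (e p) • gradient (f (e p)) (x p)‖ := norm_sum_le _ _
        _ ≤ ∑ p : Fin r, γmax * (β (e p) * (α * r * (γmax * C))) :=
            Finset.sum_le_sum fun p _ => hterm p
        _ = (γmax * (α * r * (γmax * C))) * ∑ p : Fin r, β (e p) := by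
            rw [Finset.mul_sum]
            exact Finset.sum_congr rfl fun p _ => by ring
        _ = (γmax * (α * r * (γmax * C))) * ∑ j ∈ S, β j := by
            rw [craig_sum_fin_eq hr e he heinj (fun j => β j)]
        _ ≤ (γmax * (α * r * (γmax * C))) * βtot := by
            apply mul_le_mul_of_nonneg_left
            · rw [hβtot]
              exact Finset.sum_le_sum_of_subset_of_nonneg hSV fun i hi _ => hβ i hi
            · have : (0:ℝ) ≤ (r:ℝ) := Nat.cast_nonneg r
              positivity
        _ = α * βtot * C * r * γmax ^ 2 := by ring
  -- put everything together
  have happ := happrox (x 0)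
  rw [hdecomp]
  have htri := norm_add₃_le (E := EuclideanSpace ℝ (Fin d))
    (a := x 0 - α • (∑ i ∈ V, gradient (f i) (x 0)) - wstar)
    (b := α • ((∑ i ∈ V, gradient (f i) (x 0)) - ∑ j ∈ S, γ j • gradient (f j) (x 0)))
    (c := α • (∑ p : Fin r, (γ (e p) • gradient (f (e p)) (x 0)
        - γ (e p) • gradient (f (e p)) (x p))))
  have hB : ‖α • ((∑ i ∈ V, gradient (f i) (x 0)) - ∑ j ∈ S, γ j • gradient (f j) (x 0))‖
      ≤ α * ε := by
    rw [norm_smul, Real.norm_eq_abs, abs_of_pos hα0]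
    exact mul_le_mul_of_nonneg_left happ hα0.le
  have hC3 : ‖α • (∑ p : Fin r, (γ (e p) • gradient (f (e p)) (x 0)
      - γ (e p) • gradient (f (e p)) (x p)))‖ ≤ α * (α * βtot * C * r * γmax ^ 2) := by
    rw [norm_smul, Real.norm_eq_abs, abs_of_pos hα0]
    exact mul_le_mul_of_nonneg_left hthird hα0.le
  have hrw : α * (α * βtot * C * r * γmax ^ 2) = α ^ 2 * βtot * C * r * γmax ^ 2 := by ring
  have hαε : α * ε ≤ 2 * α * ε := by nlinarith
  calc ‖(x 0 - α • (∑ i ∈ V, gradient (f i) (x 0)) - wstar)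
        + α • ((∑ i ∈ V, gradient (f i) (x 0)) - ∑ j ∈ S, γ j • gradient (f j) (x 0))
        + α • (∑ p : Fin r, (γ (e p) • gradient (f (e p)) (x 0)
            - γ (e p) • gradient (f (e p)) (x p)))‖
      ≤ _ := htri
    _ ≤ (1 - α * μ) * ‖x 0 - wstar‖ + 2 * α * ε + α ^ 2 * βtot * C * r * γmax ^ 2 := by
        rw [← hrw]
        linarith [hcontr, hB, hC3]
end
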